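/- arXiv:1011.0447 — 3 statements merged into one kernel-verified Lean document; each statement's English description precedes it below -/
import Mathlib

section
/- Let M₁ and M₂ be finite automata over Σ recognizing languages Init and Bad respectively, τ a finite length-preserving transducer over Σ, and Φ the first-order encoding of M₁, M₂, τ. Then: (a) if w ∈ L(M₁) then Init(t_w) is a semantic consequence of Φ; (b) if w ∈ L(M₂) then Bad(t_w) is a semantic consequence of Φ. -/
/-- A finite automaton over the alphabet `A`: a finite state set, a set of
transitions, an initial state and a set of final states. -/
structure FA (A : Type) : Type 1 where
  State : Type
  fin : Finite State
  delta : Set (State × A × State)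
  start : State
  final : Set State

/-- The extended transition relation `q →^w q'` of a finite automaton: the
least relation containing `q →^ε q`, the one-letter transitions, and closed
under appending a letter. -/
inductive FA.Ext {A : Type} (M : FA A) : M.State → List A → M.State → Prop
  | refl (q : M.State) : FA.Ext M q [] q
  | step {q : M.State} {w : List A} {q' : M.State} {a : A} {q'' : M.State} :
      FA.Ext M q w q' → (q', a, q'') ∈ M.delta → FA.Ext M q (w ++ [a]) q''

/-- The language recognized by a finite automaton:
`L(M) = {w | ∃ q' ∈ F, q₀ →^w q'}`. -/
def FA.lang {A : Type} (M : FA A) : Set (List A) :=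
  {w | ∃ q ∈ M.final, M.Ext M.start w q}

/-- A finite length-preserving transducer over the alphabet `A`. -/
structure FT (A : Type) : Type 1 where
  State : Type
  fin : Finite State
  delta : Set (State × A × A × State)
  start : State
  final : Set State

/-- The extended transition relation `q →^{w,u} q'` of a transducer: the least
relation containing `q →^{ε,ε} q`, the one-letter transitions, and closed under
appending a pair of letters. -/
inductive FT.Ext {A : Type} (t : FT A) :
    t.State → List A → List A → t.State → Prop
  | refl (q : t.State) : FT.Ext t q [] [] q
  | step {q : t.State} {w u : List A} {q' : t.State} {a b : A} {q'' : t.State} :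
      FT.Ext t q w u q' → (q', a, b, q'') ∈ t.delta →
      FT.Ext t q (w ++ [a]) (u ++ [b]) q''

/-- The relation `r_τ = {⟨w,u⟩ | ∃ q' ∈ F, q₀ →^{w,u} q'}` induced by a
transducer. -/
def FT.rel {A : Type} (t : FT A) (w u : List A) : Prop :=
  ∃ q ∈ t.final, t.Ext t.start w u q

/-- Interpretation `[t_w]` of the closed term `t_w = s₁ * ⋯ * sₙ` (with
`t_ε = e`) in a structure with domain `D`. -/
def wordVal {A D : Type} (mul : D → D → D) (e : D) (ca : A → D) : List A → D
  | [] => e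
  | [a] => ca a
  | a :: b :: rest => mul (ca a) (wordVal mul e ca (b :: rest))

/-- A first-order structure (domain `D`, binary operation `mul`, constants `e`,
`ca a` for letters, `c1 q`, `c2 q`, `ct q` for automata/transducer states, and
predicates `RR`, `InitP`, `BadP`, `TransP`, `T3`, `T4`) satisfies all formulas
of the encoding `Φ` of the automata `M1`, `M2` and the transducer `t`. -/
def SatRMC {A : Type} (M1 M2 : FA A) (t : FT A) {D : Type}
    (mul : D → D → D) (e : D) (ca : A → D)
    (c1 : M1.State → D) (c2 : M2.State → D) (ct : t.State → D)
    (RR InitP BadP : D → Prop) (TransP : D → D → Prop)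
    (T3 : D → D → D → Prop) (T4 : D → D → D → D → Prop) : Prop :=
  -- (1) associativity
  (∀ x y z : D, mul (mul x y) z = mul x (mul y z)) ∧
  -- (2) T³(q, e, q) for all q ∈ Q₁ ∪ Q₂
  (∀ q : M1.State, T3 (c1 q) e (c1 q)) ∧
  (∀ q : M2.State, T3 (c2 q) e (c2 q)) ∧
  -- (3) T³(q, a, q') for all (q, a, q') ∈ δ₁ ∪ δ₂
  (∀ q a q', (q, a, q') ∈ M1.delta → T3 (c1 q) (ca a) (c1 q')) ∧
  (∀ q a q', (q, a, q') ∈ M2.delta → T3 (c2 q) (ca a) (c2 q')) ∧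
  -- (4)
  (∀ x y z v w : D, T3 x y z → T3 z v w → T3 x (mul y v) w) ∧
  -- (5)
  (∀ x : D, (∃ q ∈ M1.final, T3 (c1 M1.start) x (c1 q)) → InitP x) ∧
  -- (6)
  (∀ x : D, (∃ q ∈ M2.final, T3 (c2 M2.start) x (c2 q)) → BadP x) ∧
  -- (7)
  (∀ x : D, T4 x e e x) ∧
  -- (8)
  (∀ q a b q', (q, a, b, q') ∈ t.delta → T4 (ct q) (ca a) (ca b) (ct q')) ∧
  -- (9)
  (∀ x y z v y' z' w : D,
      T4 x y z v → T4 v y' z' w → T4 x (mul y y') (mul z z') w) ∧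
  -- (10)
  (∀ x y : D, TransP x y ↔ ∃ q ∈ t.final, T4 (ct t.start) x y (ct q)) ∧
  -- (11)
  (∀ x : D, InitP x → RR x) ∧
  -- (12)
  (∀ x y : D, RR x → TransP x y → RR y)

lemma wordVal_append {A D : Type} (mul : D → D → D) (e : D) (ca : A → D)
    (assoc : ∀ x y z : D, mul (mul x y) z = mul x (mul y z))
    (w : List A) (hw : w ≠ []) (a : A) :
    wordVal mul e ca (w ++ [a]) = mul (wordVal mul e ca w) (ca a) := by
  induction w with
  | nil => exact absurd rfl hw
  | cons b rest ih =>
    cases rest with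
    | nil => rfl
    | cons c r =>
      show mul (ca b) (wordVal mul e ca ((c :: r) ++ [a])) = _
      rw [ih (by simp), ← assoc]
      rfl

lemma ext_nil {A : Type} (M : FA A) {q q' : M.State}
    (h : M.Ext q [] q') : q = q' := by
  have key : ∀ w, M.Ext q w q' → w = [] → q = q' := by
    intro w h
    induction h with
    | refl => intro _; rfl
    | step _ _ _ => intro hc; simp_all
  exact key [] h rfl

lemma ext_T3 {A D : Type} (M : FA A) (mul : D → D → D) (e : D) (ca : A → D)
    (c : M.State → D) (T3 : D → D → D → Prop)
    (assoc : ∀ x y z : D, mul (mul x y) z = mul x (mul y z))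
    (h2 : ∀ q : M.State, T3 (c q) e (c q))
    (h3 : ∀ q a q', (q, a, q') ∈ M.delta → T3 (c q) (ca a) (c q'))
    (h4 : ∀ x y z v w : D, T3 x y z → T3 z v w → T3 x (mul y v) w)
    {q : M.State} {w : List A} {q' : M.State} (h : M.Ext q w q') :
    T3 (c q) (wordVal mul e ca w) (c q') := by
  induction h with
  | refl => exact h2 q
  | @step w' p' a' p'' hext hd ih =>
    rcases eq_or_ne w' [] with rfl | hw
    · have := ext_nil M hext
      subst this
      exact h3 _ _ _ hd
    · rw [wordVal_append mul e ca assoc w' hw a']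
      exact h4 _ _ _ _ _ ih (h3 _ _ _ hd)

/-- adequacy of the `Init` and `Bad` translations: for every
first-order structure satisfying all formulas of `Φ`: (a) if `w ∈ L(M₁)` then
`Init(t_w)` holds; (b) if `w ∈ L(M₂)` then `Bad(t_w)` holds. -/
theorem init_bad_adequacy {A : Type} [Finite A] (M1 M2 : FA A) (t : FT A)
    (D : Type) (mul : D → D → D) (e : D) (ca : A → D)
    (c1 : M1.State → D) (c2 : M2.State → D) (ct : t.State → D)
    (RR InitP BadP : D → Prop) (TransP : D → D → Prop)
    (T3 : D → D → D → Prop) (T4 : D → D → D → D → Prop)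
    (hPhi : SatRMC M1 M2 t mul e ca c1 c2 ct RR InitP BadP TransP T3 T4) :
    (∀ w ∈ M1.lang, InitP (wordVal mul e ca w)) ∧
      ∀ w ∈ M2.lang, BadP (wordVal mul e ca w) := by
  obtain ⟨assoc, h2a, h2b, h3a, h3b, h4, h5, h6, -⟩ := hPhi
  constructor
  · rintro w ⟨q, hq, hext⟩
    exact h5 _ ⟨q, hq, ext_T3 M1 mul e ca c1 T3 assoc h2a h3a h4 hext⟩
  · rintro w ⟨q, hq, hext⟩
    exact h6 _ ⟨q, hq, ext_T3 M2 mul e ca c2 T3 assoc h2b h3b h4 hext⟩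
end

section
/- Let M₁ and M₂ be finite automata over Σ, τ a finite length-preserving transducer over Σ, and Φ their first-order encoding. For every word w ∈ Σ* and all states q, q' of M₁ (respectively of M₂), if q →^w q' holds in the extended transition relation of M₁ (respectively M₂), then T³(q, t_w, q') is a semantic consequence of Φ. -/
lemma wordVal_snoc {A D : Type} (mul : D → D → D) (e : D) (ca : A → D)
    (assoc : ∀ x y z : D, mul (mul x y) z = mul x (mul y z)) :
    ∀ (w : List A) (a : A), w ≠ [] →
      wordVal mul e ca (w ++ [a]) = mul (wordVal mul e ca w) (ca a)
  | [], _, h => absurd rfl h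
  | [c], a, _ => rfl
  | c :: d :: rest, a, _ => by
    show mul (ca c) (wordVal mul e ca ((d :: rest) ++ [a])) = _
    rw [wordVal_snoc mul e ca assoc (d :: rest) a (by simp), ← assoc]
    rfl

lemma FA.Ext.nil_eq {A : Type} {M : FA A} {q q' : M.State}
    (h : M.Ext q [] q') : q = q' := by
  generalize hw : ([] : List A) = w at h
  cases h with
  | refl => rfl
  | step h hd => exact absurd hw.symm (by simp)

/-- for every first-order structure satisfying all formulas of
`Φ`, whenever `q →^w q'` holds in the extended transition relation of `M₁`
(respectively of `M₂`), `T³(q, t_w, q')` holds. -/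
theorem ext_T3_adequacy {A : Type} [Finite A] (M1 M2 : FA A) (t : FT A)
    (D : Type) (mul : D → D → D) (e : D) (ca : A → D)
    (c1 : M1.State → D) (c2 : M2.State → D) (ct : t.State → D)
    (RR InitP BadP : D → Prop) (TransP : D → D → Prop)
    (T3 : D → D → D → Prop) (T4 : D → D → D → D → Prop)
    (hPhi : SatRMC M1 M2 t mul e ca c1 c2 ct RR InitP BadP TransP T3 T4) :
    (∀ (w : List A) (q q' : M1.State),
        M1.Ext q w q' → T3 (c1 q) (wordVal mul e ca w) (c1 q')) ∧
      ∀ (w : List A) (q q' : M2.State),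
        M2.Ext q w q' → T3 (c2 q) (wordVal mul e ca w) (c2 q') := by
  obtain ⟨assoc, h2a, h2b, h3a, h3b, h4, -⟩ := hPhi
  constructor
  · intro w q q' h
    induction h with
    | refl => exact h2a _
    | @step w q' a q'' hw hd ih =>
      rcases eq_or_ne w [] with rfl | hne
      · rw [hw.nil_eq]; exact h3a _ _ _ hd
      · rw [wordVal_snoc mul e ca assoc w a hne]
        exact h4 _ _ _ _ _ ih (h3a _ _ _ hd)
  · intro w q q' h
    induction h with
    | refl => exact h2b _
    | @step w q' a q'' hw hd ih =>
      rcases eq_or_ne w [] with rfl | hne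
      · rw [hw.nil_eq]; exact h3b _ _ _ hd
      · rw [wordVal_snoc mul e ca assoc w a hne]
        exact h4 _ _ _ _ _ ih (h3b _ _ _ hd)
end

section
/- Let M₁ and M₂ be finite automata over Σ, τ a finite length-preserving transducer over Σ, and Φ their first-order encoding. For all words w, u ∈ Σ* and states q, q' of τ, if q →^{w,u} q' holds in the extended transition relation of τ, then T⁴(q, t_w, t_u, q') is a semantic consequence of Φ; consequently, if ⟨w,u⟩ ∈ r_τ, then Trans(t_w, t_u) is a semantic consequence of Φ. -/
/-- for every first-order structure satisfying all formulas
of `Φ`, whenever `q →^{w,u} q'` holds in the extended transition relation of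
the transducer, `T⁴(q, t_w, t_u, q')` holds; consequently, if `⟨w,u⟩ ∈ r_τ`
then `Trans(t_w, t_u)` holds. -/
theorem ext_T4_adequacy {A : Type} [Finite A] (M1 M2 : FA A) (t : FT A)
    (D : Type) (mul : D → D → D) (e : D) (ca : A → D)
    (c1 : M1.State → D) (c2 : M2.State → D) (ct : t.State → D)
    (RR InitP BadP : D → Prop) (TransP : D → D → Prop)
    (T3 : D → D → D → Prop) (T4 : D → D → D → D → Prop)
    (hPhi : SatRMC M1 M2 t mul e ca c1 c2 ct RR InitP BadP TransP T3 T4) :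
    (∀ (w u : List A) (q q' : t.State),
        t.Ext q w u q' →
          T4 (ct q) (wordVal mul e ca w) (wordVal mul e ca u) (ct q')) ∧
      ∀ w u : List A, t.rel w u →
        TransP (wordVal mul e ca w) (wordVal mul e ca u) := by
  obtain ⟨hassoc, -, -, -, -, -, -, -, h7, h8, h9, h10, -, -⟩ := hPhi
  have hval : ∀ (a : A) (w : List A), w ≠ [] →
      wordVal mul e ca (w ++ [a]) = mul (wordVal mul e ca w) (ca a) := by
    intro a w
    induction w with
    | nil => intro h; exact absurd rfl h
    | cons b rest ih =>
      intro _
      cases rest with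
      | nil => rfl
      | cons c rest' =>
        simp only [List.cons_append, List.append_eq, wordVal] at *
        rw [ih (by simp), hassoc]
  have hnil : ∀ (w u : List A) (q q' : t.State), t.Ext q w u q' → w = [] →
      q = q' := by
    intro w u q q' h
    induction h with
    | refl => intro _; rfl
    | step _ _ _ => intro h; simp at h
  have hlen : ∀ (w u : List A) (q q' : t.State), t.Ext q w u q' →
      w.length = u.length := by
    intro w u q q' h
    induction h with
    | refl => rfl
    | step _ _ ih => simp [ih]
  have main : ∀ (w u : List A) (q q' : t.State), t.Ext q w u q' →
      T4 (ct q) (wordVal mul e ca w) (wordVal mul e ca u) (ct q') := by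
    intro w u q q' h
    induction h with
    | refl => exact h7 _
    | @step w2 u2 q2' a2 b2 q2'' hext hd ih =>
      rcases eq_or_ne w2 [] with rfl | hw
      · have hu : u2 = [] := by
          have := hlen _ _ _ _ hext; simpa using this.symm
        subst hu
        obtain rfl := hnil _ _ _ _ hext rfl
        simpa [wordVal] using h8 _ _ _ _ hd
      · have hu : u2 ≠ [] := by
          intro hu; apply hw
          have := hlen _ _ _ _ hext; rw [hu] at this; simpa using this
        rw [hval a2 w2 hw, hval b2 u2 hu]
        exact h9 _ _ _ _ _ _ _ ih (h8 _ _ _ _ hd)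
  refine ⟨main, ?_⟩
  intro w u ⟨q, hq, hext⟩
  exact (h10 _ _).mpr ⟨q, hq, main _ _ _ _ hext⟩
end
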